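/- arXiv:2205.08511 — 2 statements merged into one kernel-verified Lean document; each statement's English description precedes it below -/
import Mathlib

section
/- With B as constructed (B = ⋃_{t≥1} ({ n : d_t ∣ n } ∩ [2^{2^{t^2}}, 2^{2^{(t+1)^2}}))), the set A = ℕ of all positive integers and B satisfy: there exists c > 0 such that A(log x / log 2) · B(x) > c x log x / exp(3 sqrt(log log x) log log log x) > x for all sufficiently large x, where A(y) and B(y) denote the number of elements of A and B respectively that are ≤ y. -/
/-!
Every multiple `n ≥ 4` of `dProd s` below `2^2^((s+1)^2)` lies in `B`: it sits in some block
`t ≤ s`, and `dProd t ∣ dProd s`. Taking `s` to be the block containing `x` gives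
`B(x) > x / dProd s - 2`. For large `s`, Chebyshev's bound `π(n) ≫ n / log n` puts the first
`s` odd primes below `s²`, so `dProd s ≤ s^(2s)`; as `s² log 2 ≤ log log x + O(1)`, this is
smaller than `exp(3 √(log log x) log log log x)`. With `A(log x / log 2) ≥ log x / 2` the first
inequality follows for `c = 1/4`, and the second is `√u log u = o(u)` at `u = log log x`.
-/

open Real Filter

/-- The `i`-th odd prime (1-indexed): `oddPrime 1 = 3`, `oddPrime 2 = 5`, ... -/
noncomputable def oddPrime (i : ℕ) : ℕ := Nat.nth (fun p => p.Prime ∧ Odd p) (i - 1)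

/-- `dProd j` is the product of the first `j` odd primes. -/
noncomputable def dProd (j : ℕ) : ℕ := ∏ i ∈ Finset.Icc 1 j, oddPrime i

/-- `Bt t = { n : dProd t ∣ n } ∩ [2^(2^(t^2)), 2^(2^((t+1)^2)))`. -/
noncomputable def Bt (t : ℕ) : Set ℕ :=
  {n | dProd t ∣ n ∧ 2 ^ 2 ^ t ^ 2 ≤ n ∧ n < 2 ^ 2 ^ (t + 1) ^ 2}

/-- `Bset = ⋃_{t ≥ 1} Bt t`. -/
noncomputable def Bset : Set ℕ := ⋃ t ≥ 1, Bt t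

/-- Counting function of a set of naturals: number of elements `≤ x`. -/
noncomputable def countOf (S : Set ℕ) (x : ℝ) : ℕ := Nat.card {n : ℕ | n ∈ S ∧ (n : ℝ) ≤ x}

/-- `Aset` is the set of all positive integers. -/
def Aset : Set ℕ := {n | 1 ≤ n}

open scoped Nat.Prime

lemma infinite_setOf_prime_and_odd : {p : ℕ | p.Prime ∧ Odd p}.Infinite :=
  (Nat.infinite_setOfPred_prime.sdiff (Set.finite_singleton 2)).mono
    fun p (hp : p.Prime ∧ p ≠ 2) => ⟨hp.1, hp.1.odd_of_ne_two hp.2⟩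

lemma oddPrime_prime (i : ℕ) : (oddPrime i).Prime :=
  (Nat.nth_mem_of_infinite infinite_setOf_prime_and_odd (i - 1)).1

lemma count_prime_le_count_prime_and_odd_add_one (n : ℕ) :
    Nat.count Nat.Prime n ≤ Nat.count (fun p => p.Prime ∧ Odd p) n + 1 := by
  simp only [Nat.count_eq_card_filter_range]
  refine (Finset.card_le_card fun p hp => ?_).trans (Finset.card_insert_le 2 _)
  rw [Finset.mem_filter] at hp
  rcases eq_or_ne p 2 with rfl | h2
  · exact Finset.mem_insert_self _ _
  · exact Finset.mem_insert_of_mem (Finset.mem_filter.2 ⟨hp.1, hp.2, hp.2.odd_of_ne_two h2⟩)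

lemma oddPrime_lt_of_lt_count {i n : ℕ} (hi : 0 < i) (hin : i < Nat.count Nat.Prime n) :
    oddPrime i < n :=
  Nat.nth_lt_of_lt_count <| by
    have := count_prime_le_count_prime_and_odd_add_one n
    omega

lemma eventually_lt_primeCounting_sq : ∀ᶠ t : ℕ in atTop, t < π (t ^ 2) := by
  have hlog := (isLittleO_log_id_atTop.comp_tendsto tendsto_natCast_atTop_atTop).bound
    (c := log 2 / 8) (by positivity)
  filter_upwards [hlog, eventually_ge_atTop 2] with t hlt ht2
  have ht : (2 : ℝ) ≤ t := by exact_mod_cast ht2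
  have hℓ : 0 < log t := log_pos (by linarith)
  simp only [Function.comp, id, norm_of_nonneg hℓ.le,
    norm_of_nonneg (by linarith : (0 : ℝ) ≤ t)] at hlt
  have hlog_sq : log ((t ^ 2 : ℕ) : ℝ) = 2 * log t := by push_cast; rw [log_pow]; norm_num
  have hlog_succ : log ((t ^ 2 : ℕ) + 1 : ℝ) ≤ log 2 + 2 * log t := by
    rw [← hlog_sq, ← log_mul (by norm_num) (by positivity)]
    exact log_le_log (by positivity) (by push_cast; nlinarith)
  have hpi := Chebyshev.pi_ge (t ^ 2)
  rw [hlog_sq, div_le_iff₀ (by positivity)] at hpi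
  have h2 := log_two_gt_d9
  have : (t : ℝ) < π (t ^ 2) := by
    push_cast at hpi hlog_succ
    nlinarith
  exact_mod_cast this

lemma dProd_pos (t : ℕ) : 0 < dProd t :=
  Finset.prod_pos fun i _ => (oddPrime_prime i).pos

lemma two_le_dProd {t : ℕ} (ht : 1 ≤ t) : 2 ≤ dProd t :=
  (oddPrime_prime 1).two_le.trans <| Nat.le_of_dvd (dProd_pos t) <|
    Finset.dvd_prod_of_mem _ (Finset.mem_Icc.2 ⟨le_rfl, ht⟩)

lemma dProd_dvd_dProd_succ (t : ℕ) : dProd t ∣ dProd (t + 1) :=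
  Finset.prod_dvd_prod_of_subset _ _ _ (Finset.Icc_subset_Icc_right t.le_succ)

lemma eventually_dProd_le_pow : ∀ᶠ t : ℕ in atTop, dProd t ≤ t ^ (2 * t) := by
  filter_upwards [eventually_lt_primeCounting_sq] with t ht
  calc dProd t ≤ (t ^ 2) ^ (Finset.Icc 1 t).card := by
        refine Finset.prod_le_pow_card _ _ _ fun i hi => ?_
        rw [Finset.mem_Icc] at hi
        exact Nat.lt_succ_iff.1 (oddPrime_lt_of_lt_count hi.1 (hi.2.trans_lt ht))
    _ = t ^ (2 * t) := by rw [Nat.card_Icc, ← pow_mul]; rfl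

lemma mem_Bset_of_dvd {s n : ℕ} (hs : 1 ≤ s) (hdvd : dProd s ∣ n) (hn4 : 4 ≤ n)
    (hn : n < 2 ^ 2 ^ (s + 1) ^ 2) : n ∈ Bset := by
  induction s, hs using Nat.le_induction with
  | base => exact Set.mem_iUnion₂.2 ⟨1, le_rfl, hdvd, hn4, hn⟩
  | succ s hs ih =>
    by_cases hlt : n < 2 ^ 2 ^ (s + 1) ^ 2
    · exact ih ((dProd_dvd_dProd_succ s).trans hdvd) hlt
    · exact Set.mem_iUnion₂.2 ⟨s + 1, by omega, hdvd, not_lt.1 hlt, hn⟩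

lemma card_le_countOf {S : Set ℕ} {x : ℝ} (F : Finset ℕ)
    (hF : ∀ n ∈ F, n ∈ S ∧ (n : ℝ) ≤ x) : F.card ≤ countOf S x := by
  have hfin : {n : ℕ | n ∈ S ∧ (n : ℝ) ≤ x}.Finite :=
    (Set.finite_Iic ⌊x⌋₊).subset fun n hn => Nat.le_floor hn.2
  rw [countOf, Nat.card_coe_set_eq, ← Set.ncard_coe_finset]
  exact Set.ncard_le_ncard hF hfin

lemma countOf_Aset {y : ℝ} (hy : 0 ≤ y) : countOf Aset y = ⌊y⌋₊ := by
  have : {n : ℕ | n ∈ Aset ∧ (n : ℝ) ≤ y} = Finset.Icc 1 ⌊y⌋₊ := by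
    ext n
    simp [Aset, Nat.le_floor_iff hy]
  rw [countOf, this, Nat.card_coe_set_eq, Set.ncard_coe_finset, Nat.card_Icc, Nat.add_sub_cancel]

lemma div_dProd_sub_two_lt_countOf_Bset {s : ℕ} {x : ℝ} (hs : 1 ≤ s)
    (hx : x < 2 ^ 2 ^ (s + 1) ^ 2) : x / dProd s - 2 < countOf Bset x := by
  have hd := two_le_dProd hs
  have hdR : (0 : ℝ) < dProd s := by positivity
  have hcount := card_le_countOf (S := Bset) (x := x)
    ((Finset.Ioc 1 ⌊x / dProd s⌋₊).image (dProd s * ·)) <| by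
    simp only [Finset.mem_image, Finset.mem_Ioc]
    rintro _ ⟨k, ⟨hk1, hkx⟩, rfl⟩
    have hkx : (dProd s * k : ℝ) ≤ x := by
      rw [Nat.le_floor_iff' (by omega), le_div_iff₀ hdR] at hkx
      linarith
    refine ⟨mem_Bset_of_dvd hs (dvd_mul_right _ _) (by nlinarith) ?_, by exact_mod_cast hkx⟩
    exact_mod_cast hkx.trans_lt hx
  rw [Finset.card_image_of_injective _ (mul_right_injective₀ (by omega)), Nat.card_Ioc] at hcount
  have : (⌊x / dProd s⌋₊ : ℝ) ≤ countOf Bset x + 1 := by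
    exact_mod_cast (by omega : _ ≤ _ + 1)
  linarith [Nat.lt_floor_add_one (x / dProd s)]

lemma div_two_mul_dProd_le_countOf_Bset {s : ℕ} {x : ℝ} (hs : 1 ≤ s)
    (hx : x < 2 ^ 2 ^ (s + 1) ^ 2) (hdx : 4 * (dProd s : ℝ) ≤ x) :
    x / (2 * dProd s) ≤ countOf Bset x := by
  have hd : (0 : ℝ) < dProd s := by exact_mod_cast dProd_pos s
  have : x / (2 * dProd s) ≤ x / dProd s - 2 := by
    rw [div_sub' hd.ne', div_le_div_iff₀ (by positivity) hd]
    nlinarith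
  linarith [div_dProd_sub_two_lt_countOf_Bset hs hx]

lemma half_le_countOf_Aset {y : ℝ} (hy : 2 ≤ y) : y / 2 ≤ countOf Aset (y / log 2) := by
  rw [countOf_Aset (by positivity)]
  have := le_div_self (a := y) (by positivity) (log_pos one_lt_two)
    (log_two_lt_d9.trans (by norm_num)).le
  linarith [Nat.lt_floor_add_one (y / log 2)]

lemma exists_le_lt_succ {α : Type*} [LinearOrder α] {f : ℕ → α} {y : α} (h0 : f 0 ≤ y)
    (hf : ∃ t, y < f t) : ∃ t, f t ≤ y ∧ y < f (t + 1) := by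
  classical
  obtain ⟨t, ht⟩ : ∃ t, Nat.find hf = t + 1 := Nat.exists_eq_succ_of_ne_zero fun h =>
    (Nat.find_spec hf).not_ge (h ▸ h0)
  exact ⟨t, not_lt.1 (Nat.find_min hf (by omega)), ht ▸ Nat.find_spec hf⟩

lemma exists_le_lt_two_pow_two_pow_sq {x : ℝ} (hx : 4 ≤ x) :
    ∃ s, 1 ≤ s ∧ (2 : ℝ) ^ 2 ^ s ^ 2 ≤ x ∧ x < 2 ^ 2 ^ (s + 1) ^ 2 := by
  obtain ⟨n, hn⟩ := pow_unbounded_of_one_lt x one_lt_two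
  obtain ⟨t, ht⟩ := exists_le_lt_succ (f := fun t => (2 : ℝ) ^ 2 ^ (t + 1) ^ 2) (y := x)
    (by norm_num [hx]) ⟨n, hn.trans_le <| pow_le_pow_right₀ one_le_two <|
      (Nat.lt_two_pow_self).le.trans (Nat.pow_le_pow_right two_pos (by nlinarith))⟩
  exact ⟨t + 1, by omega, ht⟩

lemma sq_mul_log_two_add_log_log_two_le {s : ℕ} {x : ℝ} (hx : (2 : ℝ) ^ 2 ^ s ^ 2 ≤ x) :
    (s : ℝ) ^ 2 * log 2 + log (log 2) ≤ log (log x) := by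
  have h2 : (0 : ℝ) < log 2 := log_pos one_lt_two
  have hlog : (2 : ℝ) ^ s ^ 2 * log 2 ≤ log x := by
    have := log_le_log (by positivity) hx
    rwa [log_pow, Nat.cast_pow, Nat.cast_ofNat] at this
  have := log_le_log (by positivity) hlog
  rwa [log_mul (by positivity) h2.ne', log_pow, Nat.cast_pow] at this

lemma self_pow_two_mul_lt_exp {s : ℕ} {u : ℝ} (hu : exp 3 ≤ u)
    (hs : (s : ℝ) ^ 2 * log 2 + log (log 2) ≤ u) :
    (s : ℝ) ^ (2 * s) < exp (3 * √u * log u) := by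
  have hu0 : 0 < u := (exp_pos 3).trans_le hu
  have hlogu : 3 ≤ log u := (le_log_iff_exp_le hu0).2 hu
  have hsqrt : 0 < √u := sqrt_pos.2 hu0
  have h2 := log_two_gt_d9
  have h2' := log_two_lt_d9
  have hloglog2 : -1 ≤ log (log 2) := by
    have := one_sub_inv_le_log_of_pos (x := log 2) (by linarith)
    have : (log 2)⁻¹ ≤ 2 := by rw [inv_le_comm₀ (by linarith) two_pos]; linarith
    linarith
  have hs2 : (s : ℝ) ≤ 2 * √u := by
    have : (s : ℝ) ^ 2 ≤ 4 * u := by nlinarith [add_one_le_exp (3 : ℝ)]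
    nlinarith [sq_sqrt hu0.le]
  rcases Nat.eq_zero_or_pos s with rfl | hs1
  · simpa using mul_pos (mul_pos three_pos hsqrt) (by linarith)
  have hs1' : (1 : ℝ) ≤ s := by exact_mod_cast hs1
  have hlogs : log s ≤ log 2 + log u / 2 := by
    calc log s ≤ log (2 * √u) := log_le_log (by positivity) hs2
      _ = log 2 + log u / 2 := by rw [log_mul two_ne_zero hsqrt.ne', log_sqrt hu0.le]
  rw [← exp_log (by positivity : (0 : ℝ) < s ^ (2 * s)), log_pow, exp_lt_exp]
  push_cast
  nlinarith [log_nonneg hs1', mul_le_mul hs2 hlogs (log_nonneg hs1') (by positivity)]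

lemma eventually_four_mul_exp_lt : ∀ᶠ u in atTop, 4 * exp (3 * √u * log u) < exp u := by
  have h := (isLittleO_log_rpow_atTop (r := 1 / 2) (by norm_num)).bound (c := 1 / 6) (by norm_num)
  filter_upwards [h, eventually_gt_atTop (2 * log 4), eventually_ge_atTop 1] with u hu h4 h1
  rw [norm_of_nonneg (log_nonneg h1), norm_of_nonneg (by positivity), ← sqrt_eq_rpow] at hu
  calc 4 * exp (3 * √u * log u) = exp (log 4 + 3 * √u * log u) := by
        rw [exp_add, exp_log four_pos]
    _ < exp u := exp_lt_exp.2 <| by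
        nlinarith [sq_sqrt (zero_le_one.trans h1), sqrt_nonneg u]

theorem stmt_4 : ∃ c : ℝ, 0 < c ∧ ∀ᶠ x : ℝ in atTop,
    (countOf Aset (Real.log x / Real.log 2) : ℝ) * (countOf Bset x : ℝ) >
        c * x * Real.log x / Real.exp (3 * Real.sqrt (Real.log (Real.log x)) *
          Real.log (Real.log (Real.log x))) ∧
      c * x * Real.log x / Real.exp (3 * Real.sqrt (Real.log (Real.log x)) *
        Real.log (Real.log (Real.log x))) > x := by
  obtain ⟨T, hT⟩ := eventually_atTop.1 eventually_dProd_le_pow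
  have hloglog : Tendsto (fun x => log (log x)) atTop atTop :=
    tendsto_log_atTop.comp tendsto_log_atTop
  refine ⟨1 / 4, by norm_num, ?_⟩
  filter_upwards [eventually_ge_atTop 4, eventually_ge_atTop ((2 : ℝ) ^ 2 ^ T ^ 2),
    tendsto_log_atTop.eventually_ge_atTop 2, hloglog.eventually_ge_atTop (exp 3),
    hloglog.eventually eventually_four_mul_exp_lt] with x hx4 hxT hL hu hEL
  set E := exp (3 * √(log (log x)) * log (log (log x)))
  rw [exp_log (by linarith)] at hEL
  obtain ⟨s, hs1, hsx, hxs⟩ := exists_le_lt_two_pow_two_pow_sq hx4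
  have hTs : T ≤ s := by
    by_contra! h
    have : (2 : ℝ) ^ 2 ^ (s + 1) ^ 2 ≤ 2 ^ 2 ^ T ^ 2 := by gcongr <;> first | omega | norm_num
    linarith
  have hdE : (dProd s : ℝ) < E :=
    (by exact_mod_cast hT s hTs : (dProd s : ℝ) ≤ s ^ (2 * s)).trans_lt
      (self_pow_two_mul_lt_exp hu (sq_mul_log_two_add_log_log_two_le hsx))
  have hd : (0 : ℝ) < dProd s := by exact_mod_cast dProd_pos s
  have hB := div_two_mul_dProd_le_countOf_Bset hs1 hxs <| by
    linarith [log_le_sub_one_of_pos (by linarith : 0 < x)]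
  constructor
  · calc 1 / 4 * x * log x / E = x * log x / (4 * E) := by ring
      _ < x * log x / (4 * dProd s) :=
          div_lt_div_of_pos_left (mul_pos (by linarith) (by linarith)) (by positivity)
            (by linarith)
      _ = log x / 2 * (x / (2 * dProd s)) := by ring
      _ ≤ _ := mul_le_mul (half_le_countOf_Aset hL) hB (by positivity) (by positivity)
  · rw [gt_iff_lt, lt_div_iff₀ (exp_pos _)]
    nlinarith
end

section
/- There exist sets A, B ⊆ ℕ of positive integers and a constant c > 0 such that A(log x / log 2) · B(x) > c x for all sufficiently large x, yet the set C = { 2^a + b : a ∈ A, b ∈ B } has upper asymptotic density 0 (i.e., limsup_{x→∞} C(x)/x = 0). -/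
/-!
Take `A = ℕ⁺` and let `B` contain, for every `m ≥ 1`, the multiples of `2 ^ m - 1` in the window
`[2 ^ 2 ^ m, 2 ^ 2 ^ (m + 2))`. For `N ∈ [2 ^ 2 ^ (M + 1), 2 ^ 2 ^ (M + 2))` the window of index `M`
starts below `√N`, so `B(N) ≳ N / 2 ^ M` while `A(log₂ N) = log₂ N ≥ 2 ^ (M + 1)`.

On the other hand `2 ^ a` modulo `2 ^ m - 1` takes only `m` values, so the sums `2 ^ a + b` with
`b` a multiple of `2 ^ m - 1` lie in `m` residue classes and number about `m N / 2 ^ m`. An element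
`b ≤ N` of `B` is either below `2 ^ 2 ^ M ≤ √N`, giving at most `(log₂ N + 1) √N` sums, or lies in a
window of index `m ∈ [M - 1, M + 1]`. Altogether `C(N) = O(N / M)`, and `M → ∞`.
-/

open Real Filter

open Finset Topology

lemma countOf_eq_card (S : Set ℕ) [DecidablePred (· ∈ S)] {x : ℝ} (hx : 0 ≤ x) :
    countOf S x = #{n ∈ range (⌊x⌋₊ + 1) | n ∈ S} := by
  rw [countOf, ← Set.ncard_coe_finset, ← Nat.card_coe_set_eq]
  congr 2; ext n
  rw [mem_coe, mem_filter, Set.mem_ofPred, mem_range, Nat.lt_add_one_iff, Nat.le_floor_iff hx,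
    and_comm]

lemma countOf_Ici_one {y : ℝ} (hy : 0 ≤ y) : countOf (Set.Ici 1) y = ⌊y⌋₊ := by
  have : {n ∈ range (⌊y⌋₊ + 1) | n ∈ Set.Ici 1} = Icc 1 ⌊y⌋₊ := by
    ext n; simp only [mem_filter, mem_range, Set.mem_Ici, mem_Icc]; omega
  rw [countOf_eq_card _ hy, this, Nat.card_Icc, Nat.add_sub_cancel]

lemma floor_log_div_log_two {x : ℝ} (hx : 1 ≤ x) : ⌊log x / log 2⌋₊ = Nat.log 2 ⌊x⌋₊ := by
  rw [Real.log_div_log, ← Nat.cast_inj (R := ℤ), Int.natCast_floor_eq_floor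
    (Real.logb_nonneg one_lt_two hx)]
  exact_mod_cast (Real.floor_logb_natCast (b := 2) (by linarith)).trans
    (Int.log_of_one_le_right 2 hx)

lemma tendsto_div_of_eventually_mul_le {f : ℝ → ℝ} (c : ℝ) (hf : ∀ᶠ x in atTop, 0 ≤ f x)
    (h : ∀ᶠ k : ℕ in atTop, ∀ᶠ x in atTop, k * f x ≤ c * x) :
    Tendsto (fun x => f x / x) atTop (𝓝 0) := by
  refine tendsto_order.2 ⟨fun a ha => ?_, fun ε hε => ?_⟩
  · filter_upwards [hf, eventually_ge_atTop 0] with x hfx hx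
    exact ha.trans_le (div_nonneg hfx hx)
  · obtain ⟨k, ⟨hk, hk0⟩, hkc⟩ := ((h.and (eventually_gt_atTop 0)).and
      (tendsto_natCast_atTop_atTop.eventually_gt_atTop (c / ε))).exists
    have hk0' : (0 : ℝ) < k := Nat.cast_pos.2 hk0
    filter_upwards [hk, eventually_gt_atTop 0] with x hkx hx
    rw [div_lt_iff₀ hx]
    rw [div_lt_iff₀ hε] at hkc
    nlinarith

lemma pow_modEq_pow_mod {q : ℕ} (hq : 0 < q) (a m : ℕ) :
    q ^ a ≡ q ^ (a % m) [MOD q ^ m - 1] := by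
  have h : q ^ m ≡ 1 [MOD q ^ m - 1] := Nat.modEq_sub (Nat.one_le_pow _ _ hq)
  calc q ^ a = (q ^ m) ^ (a / m) * q ^ (a % m) := by rw [← pow_mul, ← pow_add, Nat.div_add_mod]
    _ ≡ 1 ^ (a / m) * q ^ (a % m) [MOD q ^ m - 1] := (h.pow _).mul_right _
    _ = q ^ (a % m) := by rw [one_pow, one_mul]

lemma succ_sq_le_two_pow {M : ℕ} (hM : 6 ≤ M) : (M + 1) ^ 2 ≤ 2 ^ M := by
  induction M, hM using Nat.le_induction with
  | base => norm_num
  | succ k _ ih => rw [pow_succ 2 k]; nlinarith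

lemma pow_two_pow_lt_pow_two_pow_iff {a b : ℕ} : 2 ^ 2 ^ a < 2 ^ 2 ^ b ↔ a < b := by
  simp [Nat.pow_lt_pow_iff_right]

lemma pow_two_pow_succ (M : ℕ) : 2 ^ 2 ^ (M + 1) = 2 ^ 2 ^ M * 2 ^ 2 ^ M := by
  rw [← pow_add, pow_succ, mul_two]

lemma exists_window {M₀ N : ℕ} (hN : 2 ^ 2 ^ (M₀ + 1) ≤ N) :
    ∃ M, M₀ ≤ M ∧ 2 ^ 2 ^ (M + 1) ≤ N ∧ N < 2 ^ 2 ^ (M + 2) := by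
  have hN0 : N ≠ 0 := (Nat.two_pow_pos _).trans_le hN |>.ne'
  set J := Nat.log 2 N
  have hJ : 2 ^ (M₀ + 1) ≤ J := Nat.le_log_of_pow_le one_lt_two hN
  have hJ0 : J ≠ 0 := (Nat.two_pow_pos _).trans_le hJ |>.ne'
  set P := Nat.log 2 J
  have hP : M₀ + 1 ≤ P := Nat.le_log_of_pow_le one_lt_two hJ
  refine ⟨P - 1, by omega, ?_, ?_⟩
  · rw [Nat.sub_add_cancel (by omega)]
    exact (Nat.pow_le_pow_right two_pos (Nat.pow_log_le_self 2 hJ0)).trans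
      (Nat.pow_log_le_self 2 hN0)
  · rw [show P - 1 + 2 = P + 1 by omega]
    exact (Nat.lt_pow_succ_log_self one_lt_two N).trans_le
      (Nat.pow_le_pow_right two_pos (Nat.lt_pow_succ_log_self one_lt_two J))

lemma card_filter_dvd_Ioc (L N d : ℕ) (h : L ≤ N) : N / d - L / d ≤ #{n ∈ Ioc L N | d ∣ n} := by
  rw [← Nat.Ioc_filter_dvd_card_eq_div N d, ← Nat.Ioc_filter_dvd_card_eq_div L d,
    tsub_le_iff_right]
  calc #{n ∈ Ioc 0 N | d ∣ n} = #{n ∈ Ioc 0 L ∪ Ioc L N | d ∣ n} := by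
        rw [Ioc_union_Ioc_eq_Ioc (Nat.zero_le _) h]
    _ ≤ _ := by rw [filter_union, add_comm]; exact card_union_le _ _

lemma mul_card_filter_modEq_le (N v : ℕ) {d : ℕ} (hd : 0 < d) :
    d * #{n ∈ range (N + 1) | n ≡ v [MOD d]} ≤ N + 1 + d := by
  rw [← Nat.count_eq_card_filter_range, Nat.count_modEq_card _ hd]
  have := Nat.mul_div_le (N + 1) d
  split_ifs <;> nlinarith

section Sumsets

open scoped Classical

lemma mul_card_pow_two_add_dvd_le (N : ℕ) {m : ℕ} (hm : 1 ≤ m) :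
    (2 ^ m - 1) * #{n ∈ range (N + 1) | ∃ a b, 2 ^ m - 1 ∣ b ∧ n = 2 ^ a + b} ≤
      m * (N + 2 ^ m) := by
  set d := 2 ^ m - 1
  have hd : 0 < d := by have := Nat.one_lt_two_pow (n := m) (by omega); omega
  have hsub : {n ∈ range (N + 1) | ∃ a b, d ∣ b ∧ n = 2 ^ a + b} ⊆
      (range m).biUnion fun r => {n ∈ range (N + 1) | n ≡ 2 ^ r [MOD d]} := by
    intro n hn
    simp only [mem_filter, mem_biUnion, mem_range] at hn ⊢
    obtain ⟨hnN, a, b, hb, rfl⟩ := hn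
    refine ⟨a % m, Nat.mod_lt a (by omega), hnN, ?_⟩
    simpa using (pow_modEq_pow_mod two_pos a m).add ((Nat.modEq_zero_iff_dvd).2 hb)
  calc d * #{n ∈ range (N + 1) | ∃ a b, d ∣ b ∧ n = 2 ^ a + b}
      ≤ d * ∑ r ∈ range m, #{n ∈ range (N + 1) | n ≡ 2 ^ r [MOD d]} :=
        Nat.mul_le_mul_left _ ((card_le_card hsub).trans card_biUnion_le)
    _ = ∑ r ∈ range m, d * #{n ∈ range (N + 1) | n ≡ 2 ^ r [MOD d]} := mul_sum _ _ _
    _ ≤ ∑ r ∈ range m, (N + 1 + d) := sum_le_sum fun r _ => mul_card_filter_modEq_le N _ hd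
    _ = m * (N + 2 ^ m) := by
        rw [sum_const, card_range, smul_eq_mul]
        have := Nat.one_le_two_pow (n := m)
        congr 1
        omega

lemma card_pow_two_add_lt_le (N T : ℕ) :
    #{n ∈ range (N + 1) | ∃ a b, b < T ∧ n = 2 ^ a + b} ≤ (Nat.log 2 N + 1) * T := by
  have hsub : {n ∈ range (N + 1) | ∃ a b, b < T ∧ n = 2 ^ a + b} ⊆
      (range (Nat.log 2 N + 1) ×ˢ range T).image fun p => 2 ^ p.1 + p.2 := by
    intro n hn
    simp only [mem_filter, mem_range, mem_image, mem_product, Prod.exists] at hn ⊢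
    obtain ⟨hnN, a, b, hb, rfl⟩ := hn
    exact ⟨a, b, ⟨Nat.lt_add_one_iff.2 (Nat.le_log_of_pow_le one_lt_two (by omega)), hb⟩, rfl⟩
  calc _ ≤ _ := card_le_card hsub
    _ ≤ _ := card_image_le
    _ = _ := by rw [card_product, card_range, card_range]

def windowMultiples : Set ℕ :=
  {n | ∃ m, 1 ≤ m ∧ 2 ^ 2 ^ m ≤ n ∧ n < 2 ^ 2 ^ (m + 2) ∧ 2 ^ m - 1 ∣ n}

lemma one_le_of_mem_windowMultiples {n : ℕ} (hn : n ∈ windowMultiples) : 1 ≤ n := by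
  obtain ⟨m, -, hmn, -⟩ := hn
  exact Nat.one_le_two_pow.trans hmn

lemma le_two_pow_mul_card_windowMultiples {M N : ℕ} (hM : 1 ≤ M) (h1 : 2 ^ 2 ^ (M + 1) ≤ N)
    (h2 : N < 2 ^ 2 ^ (M + 2)) :
    N ≤ 2 ^ (M + 1) * #{n ∈ range (N + 1) | n ∈ windowMultiples} := by
  set d := 2 ^ M - 1
  set L := 2 ^ 2 ^ M
  have hd0 : 0 < d := by have := Nat.one_lt_two_pow (n := M) (by omega); omega
  have hd : 2 ^ (M + 1) = 2 * d + 2 := by rw [pow_succ]; omega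
  have hdL : d < L := by have := Nat.lt_two_pow_self (n := 2 ^ M); omega
  have hL : 4 ≤ L := Nat.pow_le_pow_right two_pos (Nat.pow_le_pow_right two_pos hM)
  have hLN : L * L ≤ N := pow_two_pow_succ M ▸ h1
  have hsub : {n ∈ Ioc L N | d ∣ n} ⊆ {n ∈ range (N + 1) | n ∈ windowMultiples} := by
    intro n hn
    simp only [mem_filter, mem_Ioc, mem_range] at hn ⊢
    exact ⟨by omega, M, hM, hn.1.1.le, by omega, hn.2⟩
  have hcount := (card_filter_dvd_Ioc L N d (by nlinarith)).trans (card_le_card hsub)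
  have hq : N < d * (N / d + 1) := Nat.lt_mul_div_succ N hd0
  have hr : d * (L / d) ≤ L := Nat.mul_div_le L d
  have hrq : L / d ≤ N / d := Nat.div_le_div_right (by nlinarith)
  calc N ≤ 2 ^ (M + 1) * (N / d - L / d) := by
        rw [hd]; zify [hrq] at hq hr ⊢; nlinarith
    _ ≤ _ := Nat.mul_le_mul_left _ hcount

lemma le_log_mul_card_windowMultiples {N : ℕ} (hN : 16 ≤ N) :
    N ≤ Nat.log 2 N * #{n ∈ range (N + 1) | n ∈ windowMultiples} := by
  obtain ⟨M, hM, h1, h2⟩ := exists_window (M₀ := 1) hN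
  calc N ≤ 2 ^ (M + 1) * #{n ∈ range (N + 1) | n ∈ windowMultiples} :=
        le_two_pow_mul_card_windowMultiples hM h1 h2
    _ ≤ _ := Nat.mul_le_mul_right _ (Nat.le_log_of_pow_le one_lt_two h1)

lemma filter_sumset_windowMultiples_subset (A : Set ℕ) {M N : ℕ} (hN : N < 2 ^ 2 ^ (M + 2)) :
    {n ∈ range (N + 1) | n ∈ {n | ∃ a ∈ A, ∃ b ∈ windowMultiples, n = 2 ^ a + b}} ⊆
      {n ∈ range (N + 1) | ∃ a b, b < 2 ^ 2 ^ M ∧ n = 2 ^ a + b} ∪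
        (Icc (M - 1) (M + 1)).biUnion fun m =>
          {n ∈ range (N + 1) | ∃ a b, 2 ^ m - 1 ∣ b ∧ n = 2 ^ a + b} := by
  intro n hn
  simp only [Set.mem_ofPred_eq, mem_filter, mem_range, mem_union, mem_biUnion, mem_Icc] at hn ⊢
  obtain ⟨hnN, a, -, b, ⟨m, -, hmb, hbm, hdvd⟩, rfl⟩ := hn
  rcases lt_or_ge b (2 ^ 2 ^ M) with hb | hb
  · exact Or.inl ⟨hnN, a, b, hb, rfl⟩
  · have hbN : b < N + 1 := (Nat.le_add_left _ _).trans_lt hnN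
    have hmM : m < M + 2 := pow_two_pow_lt_pow_two_pow_iff.1 (by omega)
    have hMm : M < m + 2 := pow_two_pow_lt_pow_two_pow_iff.1 (by omega)
    exact Or.inr ⟨m, ⟨by omega, by omega⟩, hnN, a, b, hdvd, rfl⟩

lemma succ_mul_card_pow_two_add_dvd_le {M m N : ℕ} (hM : 6 ≤ M) (hm : m ∈ Icc (M - 1) (M + 1))
    (hN : 2 ^ (M + 1) ≤ N) :
    (M + 1) * #{n ∈ range (N + 1) | ∃ a b, 2 ^ m - 1 ∣ b ∧ n = 2 ^ a + b} ≤ 8 * N := by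
  rw [mem_Icc] at hm
  set Y := #{n ∈ range (N + 1) | ∃ a b, 2 ^ m - 1 ∣ b ∧ n = 2 ^ a + b}
  have hD : 2 ^ M = 2 ^ (M - 2) * 4 := by
    rw [show 4 = 2 ^ 2 by rfl, ← pow_add, Nat.sub_add_cancel (by omega)]
  have hDm : 2 ^ (M - 2) ≤ 2 ^ m - 1 := by
    have h1 : 2 ^ (M - 1) = 2 ^ (M - 2) * 2 := by rw [← pow_succ]; congr 1; omega
    have := Nat.pow_le_pow_right two_pos hm.1
    have := Nat.one_le_two_pow (n := M - 2)
    omega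
  have h2m : 2 ^ m ≤ N := (Nat.pow_le_pow_right two_pos hm.2).trans hN
  have hY : 2 ^ (M - 2) * Y ≤ (M + 1) * (2 * N) :=
    calc 2 ^ (M - 2) * Y ≤ (2 ^ m - 1) * Y := Nat.mul_le_mul_right _ hDm
      _ ≤ m * (N + 2 ^ m) := mul_card_pow_two_add_dvd_le N (by omega)
      _ ≤ (M + 1) * (2 * N) := Nat.mul_le_mul hm.2 (by omega)
  have hsq := succ_sq_le_two_pow hM
  refine Nat.le_of_mul_le_mul_left ?_ (Nat.two_pow_pos (M - 2))
  nlinarith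

lemma succ_mul_card_pow_two_add_lt_le {M N : ℕ} (hM : 6 ≤ M) (h1 : 2 ^ 2 ^ (M + 1) ≤ N)
    (h2 : N < 2 ^ 2 ^ (M + 2)) :
    (M + 1) * #{n ∈ range (N + 1) | ∃ a b, b < 2 ^ 2 ^ M ∧ n = 2 ^ a + b} ≤ N := by
  set T := 2 ^ 2 ^ M
  have hlog : Nat.log 2 N + 1 ≤ 2 ^ (M + 2) :=
    Nat.log_lt_of_lt_pow ((Nat.two_pow_pos _).trans_le h1).ne' h2
  have hsq := succ_sq_le_two_pow hM
  have hMT : (M + 1) * 2 ^ (M + 2) ≤ T :=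
    calc (M + 1) * 2 ^ (M + 2) ≤ 2 ^ M * 2 ^ (M + 2) := Nat.mul_le_mul_right _ (by nlinarith)
      _ = 2 ^ (2 * M + 2) := by rw [← pow_add]; ring_nf
      _ ≤ T := Nat.pow_le_pow_right two_pos (by nlinarith)
  calc (M + 1) * #{n ∈ range (N + 1) | ∃ a b, b < T ∧ n = 2 ^ a + b}
      ≤ (M + 1) * ((Nat.log 2 N + 1) * T) := Nat.mul_le_mul_left _ (card_pow_two_add_lt_le N T)
    _ ≤ (M + 1) * 2 ^ (M + 2) * T := by rw [mul_assoc]; gcongr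
    _ ≤ T * T := Nat.mul_le_mul_right _ hMT
    _ ≤ N := pow_two_pow_succ M ▸ h1

lemma succ_mul_card_sumset_windowMultiples_le (A : Set ℕ) {M N : ℕ} (hM : 6 ≤ M)
    (h1 : 2 ^ 2 ^ (M + 1) ≤ N) (h2 : N < 2 ^ 2 ^ (M + 2)) :
    (M + 1) * #{n ∈ range (N + 1) | n ∈ {n | ∃ a ∈ A, ∃ b ∈ windowMultiples, n = 2 ^ a + b}} ≤
      25 * N := by
  have hN : 2 ^ (M + 1) ≤ N := (Nat.lt_two_pow_self.le).trans h1
  calc _ ≤ (M + 1) * (#{n ∈ range (N + 1) | ∃ a b, b < 2 ^ 2 ^ M ∧ n = 2 ^ a + b} +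
          ∑ m ∈ Icc (M - 1) (M + 1),
            #{n ∈ range (N + 1) | ∃ a b, 2 ^ m - 1 ∣ b ∧ n = 2 ^ a + b}) :=
        Nat.mul_le_mul_left _ ((card_le_card (filter_sumset_windowMultiples_subset A h2)).trans
          ((card_union_le _ _).trans (Nat.add_le_add_left card_biUnion_le _)))
    _ ≤ N + ∑ m ∈ Icc (M - 1) (M + 1), 8 * N := by
        rw [mul_add, mul_sum]
        exact Nat.add_le_add (succ_mul_card_pow_two_add_lt_le hM h1 h2)
          (sum_le_sum fun m hm => succ_mul_card_pow_two_add_dvd_le hM hm hN)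
    _ = 25 * N := by
        rw [sum_const, Nat.card_Icc, smul_eq_mul, show M + 1 + 1 - (M - 1) = 3 by omega]
        ring

lemma eventually_countOf_log_mul_countOf_windowMultiples_gt :
    ∀ᶠ x : ℝ in atTop,
      (countOf (Set.Ici 1) (log x / log 2) : ℝ) * countOf windowMultiples x > 1 / 2 * x := by
  filter_upwards [eventually_ge_atTop 16] with x hx
  have hN : 16 ≤ ⌊x⌋₊ := Nat.le_floor (by exact_mod_cast hx)
  rw [countOf_Ici_one (div_nonneg (log_nonneg (by linarith)) (log_nonneg one_le_two)),
    floor_log_div_log_two (by linarith), countOf_eq_card _ (by linarith)]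
  have hlt := Nat.lt_floor_add_one x
  have hle : (⌊x⌋₊ : ℝ) ≤ Nat.log 2 ⌊x⌋₊ * #{n ∈ range (⌊x⌋₊ + 1) | n ∈ windowMultiples} := by
    exact_mod_cast le_log_mul_card_windowMultiples hN
  have : (16 : ℝ) ≤ ⌊x⌋₊ := by exact_mod_cast hN
  linarith

lemma tendsto_countOf_sumset_windowMultiples_div (A : Set ℕ) :
    Tendsto (fun x : ℝ =>
      (countOf {n | ∃ a ∈ A, ∃ b ∈ windowMultiples, n = 2 ^ a + b} x : ℝ) / x) atTop (𝓝 0) := by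
  refine tendsto_div_of_eventually_mul_le 25 (.of_forall fun _ => Nat.cast_nonneg _) ?_
  filter_upwards [eventually_ge_atTop 7] with k hk
  filter_upwards [eventually_ge_atTop ((2 : ℝ) ^ 2 ^ k)] with x hx
  have hx0 : 0 ≤ x := (by positivity : (0 : ℝ) ≤ 2 ^ 2 ^ k).trans hx
  have hN : 2 ^ 2 ^ (k - 1 + 1) ≤ ⌊x⌋₊ :=
    Nat.le_floor (by rw [Nat.sub_add_cancel (by omega)]; exact_mod_cast hx)
  obtain ⟨M, hkM, h1, h2⟩ := exists_window hN
  have hbound := succ_mul_card_sumset_windowMultiples_le A (by omega) h1 h2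
  rw [countOf_eq_card _ hx0]
  calc (k : ℝ) * _ ≤ ((M + 1 : ℕ) : ℝ) * _ := by gcongr; exact_mod_cast (by omega : k ≤ M + 1)
    _ ≤ 25 * (⌊x⌋₊ : ℝ) := by exact_mod_cast hbound
    _ ≤ 25 * x := by gcongr; exact Nat.floor_le hx0

end Sumsets

theorem stmt_12 : ∃ A B : Set ℕ, (∀ n ∈ A, 1 ≤ n) ∧ (∀ n ∈ B, 1 ≤ n) ∧
    (∃ c : ℝ, 0 < c ∧ ∀ᶠ x : ℝ in atTop,
      (countOf A (Real.log x / Real.log 2) : ℝ) * (countOf B x : ℝ) > c * x) ∧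
    Filter.limsup (fun x : ℝ =>
      (countOf {n : ℕ | ∃ a ∈ A, ∃ b ∈ B, n = 2 ^ a + b} x : ℝ) / x) atTop = 0 :=
  ⟨Set.Ici 1, windowMultiples, fun _ hn => hn, fun _ => one_le_of_mem_windowMultiples,
    ⟨1 / 2, one_half_pos, eventually_countOf_log_mul_countOf_windowMultiples_gt⟩,
    (tendsto_countOf_sumset_windowMultiples_div _).limsup_eq⟩
end
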